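/- Let A be a commutative K-ring, P an A-module, Q another A-module. There is an A-module isomorphism Dif_k(P,Q) ≅ Hom_A(J^k(P), Q): every k-order Q-valued differential operator Δ on P factorizes uniquely as Δ = 𝔣^Δ ∘ J^k through the canonical map J^k: P → J^k(P), p ↦ 1 ⊗_k p, and an A-module homomorphism 𝔣^Δ: J^k(P) → Q. -/

import Mathlib

open TensorProduct

section

variable (K A : Type*) [CommRing K] [CommRing A] [Algebra K A]
variable (P : Type*) [AddCommGroup P] [Module K P] [Module A P] [IsScalarTower K A P]

/-- Scalar multiplication by `b : A` as a `K`-linear endomorphism of `P`. -/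
def smulK (b : A) : P →ₗ[K] P where
  toFun p := b • p
  map_add' := smul_add b
  map_smul' k p := smul_comm b k p

/-- `δ^b (a ⊗ p) = (b a) ⊗ p − a ⊗ (b • p)` on `A ⊗_K P`. -/
noncomputable def deltaT (b : A) : (A ⊗[K] P) →ₗ[K] (A ⊗[K] P) :=
  TensorProduct.map (LinearMap.mulLeft K b) LinearMap.id -
    TensorProduct.map LinearMap.id (smulK K A P b)

/-- Iterated composition `δ^{b_0} ∘ ⋯ ∘ δ^{b_{n-1}}`. -/
noncomputable def deltaTComp : (n : ℕ) → (Fin n → A) → ((A ⊗[K] P) →ₗ[K] (A ⊗[K] P))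
  | 0, _ => LinearMap.id
  | n + 1, bs => deltaT K A P (bs 0) ∘ₗ deltaTComp n (fun i => bs i.succ)

/-- The submodule `μ^{k+1} ⊂ A ⊗_K P` generated by all
`δ^{b_0} ∘ ⋯ ∘ δ^{b_k} (a ⊗ p)`. -/
noncomputable def jetRel (k : ℕ) : Submodule A (A ⊗[K] P) :=
  Submodule.span A {x | ∃ (bs : Fin (k + 1) → A) (a : A) (p : P),
    x = deltaTComp K A P (k + 1) bs (a ⊗ₜ[K] p)}

/-- The `k`-order jet module `J^k(P) = (A ⊗_K P) / μ^{k+1}`. -/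
noncomputable def Jet (k : ℕ) : Type _ := (A ⊗[K] P) ⧸ jetRel K A P k

noncomputable instance (k : ℕ) : AddCommGroup (Jet K A P k) :=
  Submodule.Quotient.addCommGroup _

noncomputable instance (k : ℕ) : Module A (Jet K A P k) :=
  Submodule.Quotient.module _

/-- The canonical morphism `J^k : P → J^k(P)`, `p ↦ 1 ⊗_k p`. -/
noncomputable def jetMk (k : ℕ) (p : P) : Jet K A P k :=
  Submodule.Quotient.mk ((1 : A) ⊗ₜ[K] p)

/-- `(δ_a Φ)(p) = a • Φ p − Φ (a • p)`. -/
def deltaOp {Q : Type*} [AddCommGroup Q] [Module K Q] [Module A Q] [IsScalarTower K A Q]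
    (a : A) (Φ : P →ₗ[K] Q) : P →ₗ[K] Q where
  toFun p := a • Φ p - Φ (a • p)
  map_add' p q := by simp [smul_add]; abel
  map_smul' k p := by
    simp only [RingHom.id_apply, smul_sub]
    rw [smul_comm a k p, Φ.map_smul k (a • p), Φ.map_smul k p, smul_comm a k (Φ p)]

/-- `Δ` is a differential operator of order `s`. -/
def IsDiffOp {Q : Type*} [AddCommGroup Q] [Module K Q] [Module A Q] [IsScalarTower K A Q] :
    ℕ → (P →ₗ[K] Q) → Prop
  | 0, Δ => ∀ a : A, deltaOp K A P a Δ = 0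
  | s + 1, Δ => ∀ a : A, IsDiffOp s (deltaOp K A P a Δ)

end

/-!
Base change identifies `K`-linear maps `Δ : P → Q` with `A`-linear maps
`Δ̃ : A ⊗_K P → Q`, `a ⊗ p ↦ a • Δ p`, and this identification intertwines the operator `δ^b` on
`A ⊗_K P` with `δ_b` on operators: `Δ̃ ∘ δ^b = (δ_b Δ)~`. By induction on the order, `Δ` is a
differential operator of order `k` iff `Δ̃` kills every `δ^{b_0} ∘ ⋯ ∘ δ^{b_k} (x)`, i.e. iff `Δ̃`
vanishes on `μ^{k+1}` and hence descends to `J^k(P)`. The factorization is unique because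
`a ⊗ p = a • (1 ⊗ p)`, so `J^k(P)` is generated as an `A`-module by the image of `J^k`.
-/

namespace Submodule

variable {R M N : Type*} [Ring R] [AddCommGroup M] [Module R M] [AddCommGroup N] [Module R N]

def liftQEquiv (p : Submodule R M) :
    {f : M →ₗ[R] N // p ≤ LinearMap.ker f} ≃ (M ⧸ p →ₗ[R] N) where
  toFun f := p.liftQ f f.2
  invFun g := ⟨g ∘ₗ p.mkQ, fun x hx => by simp [(Quotient.mk_eq_zero p).2 hx]⟩
  left_inv f := Subtype.ext (p.liftQ_mkQ f.1 f.2)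
  right_inv g := p.linearMap_qext (p.liftQ_mkQ _ _)

end Submodule

section Jet

variable {K A : Type*} [CommRing K] [CommRing A] [Algebra K A]
variable {P : Type*} [AddCommGroup P] [Module K P] [Module A P] [IsScalarTower K A P]
variable {Q : Type*} [AddCommGroup Q] [Module K Q] [Module A Q] [IsScalarTower K A Q]

lemma liftBaseChange_deltaT (Δ : P →ₗ[K] Q) (b : A) (x : A ⊗[K] P) :
    Δ.liftBaseChange A (deltaT K A P b x) = (deltaOp K A P b Δ).liftBaseChange A x := by
  induction x using TensorProduct.induction_on with
  | zero => simp
  | tmul a p =>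
    simp [deltaT, smulK, deltaOp, smul_sub, mul_smul, smul_comm a b]
  | add x y hx hy => simp only [map_add, hx, hy]

lemma deltaTComp_cons (n : ℕ) (b : A) (bs : Fin n → A) :
    deltaTComp K A P (n + 1) (Fin.cons b bs) = deltaT K A P b ∘ₗ deltaTComp K A P n bs :=
  rfl

lemma deltaOp_eq_zero_iff (b : A) (Δ : P →ₗ[K] Q) :
    deltaOp K A P b Δ = 0 ↔ ∀ x, Δ.liftBaseChange A (deltaT K A P b x) = 0 := by
  rw [← (LinearMap.liftBaseChangeEquiv A).map_eq_zero_iff]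
  simp only [liftBaseChange_deltaT]
  exact LinearMap.ext_iff

lemma isDiffOp_iff_liftBaseChange_deltaTComp (s : ℕ) (Δ : P →ₗ[K] Q) :
    IsDiffOp K A P s Δ ↔
      ∀ (bs : Fin (s + 1) → A) (x : A ⊗[K] P),
        Δ.liftBaseChange A (deltaTComp K A P (s + 1) bs x) = 0 := by
  induction s generalizing Δ with
  | zero =>
    rw [Fin.forall_fin_succ_pi]
    simp only [IsDiffOp, deltaOp_eq_zero_iff, Fin.forall_fin_zero_pi, Fin.cons_zero, deltaTComp,
      LinearMap.comp_id]
  | succ s ih =>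
    rw [Fin.forall_fin_succ_pi]
    simp only [IsDiffOp, ih, deltaTComp_cons, LinearMap.comp_apply, liftBaseChange_deltaT]

lemma isDiffOp_iff_jetRel_le_ker (k : ℕ) (Δ : P →ₗ[K] Q) :
    IsDiffOp K A P k Δ ↔ jetRel K A P k ≤ LinearMap.ker (Δ.liftBaseChange A) := by
  rw [isDiffOp_iff_liftBaseChange_deltaTComp, jetRel, Submodule.span_le]
  constructor
  · rintro h _ ⟨bs, a, p, rfl⟩
    exact h bs _
  · intro h bs x
    induction x using TensorProduct.induction_on with
    | zero => simp
    | tmul a p => exact h ⟨bs, a, p, rfl⟩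
    | add x y hx hy => simp only [map_add, hx, hy, add_zero]

noncomputable def diffOpEquivJetHom (k : ℕ) :
    {Δ : P →ₗ[K] Q // IsDiffOp K A P k Δ} ≃ (Jet K A P k →ₗ[A] Q) :=
  ((LinearMap.liftBaseChangeEquiv A).toEquiv.subtypeEquiv
    (isDiffOp_iff_jetRel_le_ker k)).trans (jetRel K A P k).liftQEquiv

lemma diffOpEquivJetHom_apply_jetMk (k : ℕ) (Δ : {Δ : P →ₗ[K] Q // IsDiffOp K A P k Δ})
    (p : P) : diffOpEquivJetHom k Δ (jetMk K A P k p) = Δ.1 p := by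
  show (jetRel K A P k).liftQ (Δ.1.liftBaseChange A) _ (Submodule.Quotient.mk (1 ⊗ₜ p)) = Δ.1 p
  exact Δ.1.liftBaseChange_one_tmul A p

lemma jetHom_ext {k : ℕ} {f g : Jet K A P k →ₗ[A] Q}
    (h : ∀ p : P, f (jetMk K A P k p) = g (jetMk K A P k p)) : f = g :=
  Submodule.linearMap_qext _ <| (LinearMap.liftBaseChangeEquiv A).symm.injective <| LinearMap.ext h

end Jet

/-- There is an `A`-module isomorphism
`Dif_k(P,Q) ≅ Hom_A(J^k(P), Q)`: every `k`-order `Q`-valued differential operator `Δ`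
on `P` factorizes uniquely as `Δ = 𝔣^Δ ∘ J^k` through the canonical map
`J^k : P → J^k(P)` and an `A`-module homomorphism `𝔣^Δ : J^k(P) → Q`. -/
theorem diffOp_equiv_hom_jet
    (K A P Q : Type*) [CommRing K] [CommRing A] [Algebra K A]
    [AddCommGroup P] [Module K P] [Module A P] [IsScalarTower K A P]
    [AddCommGroup Q] [Module K Q] [Module A Q] [IsScalarTower K A Q]
    (k : ℕ) :
    ∃ e : {Δ : P →ₗ[K] Q // IsDiffOp K A P k Δ} ≃ (Jet K A P k →ₗ[A] Q),
      (∀ (Δ : {Δ : P →ₗ[K] Q // IsDiffOp K A P k Δ}) (p : P),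
        Δ.1 p = e Δ (jetMk K A P k p)) ∧
      (∀ f g : Jet K A P k →ₗ[A] Q,
        (∀ p : P, f (jetMk K A P k p) = g (jetMk K A P k p)) → f = g) :=
  ⟨diffOpEquivJetHom k, fun Δ p => (diffOpEquivJetHom_apply_jetMk k Δ p).symm,
    fun _ _ => jetHom_ext⟩
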